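/- Let N be a 4-dimensional nil evolution algebra over a field F of characteristic ≠ 2 which is associative and indecomposable. Then N admits a natural basis (v_1, v_2, v_3, v_4) and there exist α, β ∈ F, α ≠ 0, β ≠ 0, such that v_1·v_1 = v_4, v_2·v_2 = α·v_4, v_3·v_3 = β·v_4, v_4·v_4 = 0 (the algebra N_{4,5}(α,β)). -/

import Mathlib

/-!
Associativity gives `(eᵢ²) eⱼ = eᵢ (eᵢ eⱼ) = 0` for `i ≠ j`, and `eⱼ^(n+2) = cⱼⱼⁿ eⱼ²` with `eⱼ`
nilpotent, so every square `eᵢ²` lies in the span `W` of the basis vectors of square zero, and `W`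
annihilates `A`. If some `e_z ∈ W` is not in `A²`, the line through it splits off as an ideal.
Otherwise, if two basis vectors have square zero, `A²` contains them and is spanned by the squares
of the two remaining ones, `e_p` and `e_q`, so `A = ⟨e_p, e_p²⟩ ⊕ ⟨e_q, e_q²⟩`. Hence exactly one
basis vector `e_z` has square zero, the other squares are nonzero multiples of it, and rescaling
`e_z` gives `N_{4,5}(α, β)`.
-/

/-- Principal powers: `ppow m a k = a^(k+1)`. -/
def ppow {F A : Type*} [Field F] [AddCommGroup A] [Module F A]
    (m : A →ₗ[F] A →ₗ[F] A) (a : A) : ℕ → A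
  | 0 => a
  | k + 1 => m (ppow m a k) a

open Module Submodule

section Decomposition

variable {F A : Type*} [Field F] [AddCommGroup A] [Module F A]

def IsIdeal (m : A →ₗ[F] A →ₗ[F] A) (I : Submodule F A) : Prop :=
  ∀ x ∈ I, ∀ y : A, m x y ∈ I

def IsDecomposable (m : A →ₗ[F] A →ₗ[F] A) : Prop :=
  ∃ I J : Submodule F A, IsIdeal m I ∧ IsIdeal m J ∧ I ≠ ⊥ ∧ J ≠ ⊥ ∧ IsCompl I J

/-- A line of the annihilator missing `A²` splits off, a hyperplane through `A²` being the
complementary ideal. -/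
theorem isDecomposable_of_mul_eq_zero_of_notMem {m : A →ₗ[F] A →ₗ[F] A} {w : A}
    (hw : ∀ y, m w y = 0) (hwA : w ∉ map₂ m ⊤ ⊤) (hw_top : span F {w} ≠ ⊤) :
    IsDecomposable m := by
  obtain ⟨f, hfw, hAf⟩ := exists_le_ker_of_notMem hwA
  have hf : Function.Surjective f :=
    LinearMap.range_eq_top.mp (Dual.range_eq_top_of_ne_zero fun h => hfw (by simp [h]))
  have hcompl : IsCompl (LinearMap.ker f) (span F {w}) :=
    isCompl_span_singleton_of_isCoatom_of_notMem (LinearMap.isCoatom_ker_of_surjective hf) hfw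
  refine ⟨LinearMap.ker f, span F {w}, fun x _ y => hAf (apply_mem_map₂ m mem_top mem_top),
    fun x hx y => ?_, fun h => hw_top (eq_top_of_bot_isCompl (h ▸ hcompl)), ?_, hcompl⟩
  · obtain ⟨c, rfl⟩ := mem_span_singleton.mp hx
    simp [hw]
  · rw [Ne, span_singleton_eq_bot]
    rintro rfl
    exact hwA (zero_mem _)

end Decomposition

theorem Module.Basis.span_singleton_ne_top {F A ι : Type*} [Field F] [AddCommGroup A]
    [Module F A] [Nontrivial ι] (e : Basis ι F A) (i : ι) : span F {e i} ≠ ⊤ := by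
  obtain ⟨j, hji⟩ := exists_ne i
  intro h
  have : e j ∈ span F (e '' {i}) := by simp [h]
  rw [Basis.mem_span_image, Basis.repr_self] at this
  simp [hji] at this

section EvolutionAlgebra

variable {F A ι : Type*} [Field F] [AddCommGroup A] [Module F A]

def IsNaturalBasis (m : A →ₗ[F] A →ₗ[F] A) (e : Basis ι F A) : Prop :=
  ∀ i j, i ≠ j → m (e i) (e j) = 0

namespace IsNaturalBasis

variable {m : A →ₗ[F] A →ₗ[F] A} {e : Basis ι F A}

theorem mul_basis_left (he : IsNaturalBasis m e) (i : ι) (y : A) :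
    m (e i) y = e.repr y i • m (e i) (e i) := by
  suffices m (e i) = (e.coord i).smulRight (m (e i) (e i)) from congr($this y)
  refine e.ext fun j => ?_
  rcases eq_or_ne i j with rfl | hij
  · simp
  · simp [he i j hij, Finsupp.single_eq_of_ne hij]

theorem mul_basis_right (he : IsNaturalBasis m e) (x : A) (j : ι) :
    m x (e j) = e.repr x j • m (e j) (e j) := by
  suffices m.flip (e j) = (e.coord j).smulRight (m (e j) (e j)) from congr($this x)
  refine e.ext fun i => ?_
  rcases eq_or_ne i j with rfl | hij
  · simp
  · simp [he i j hij, hij]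

theorem ppow_succ (he : IsNaturalBasis m e) (j : ι) (n : ℕ) :
    ppow m (e j) (n + 1) = e.repr (m (e j) (e j)) j ^ n • m (e j) (e j) := by
  induction n with
  | zero => simp [ppow]
  | succ n ih =>
    rw [ppow, ih, map_smul, LinearMap.smul_apply, he.mul_basis_right (m (e j) (e j)), smul_smul,
      ← pow_succ]

theorem repr_sq_eq_zero (he : IsNaturalBasis m e) (hnil : ∀ a : A, ∃ k, ppow m a k = 0)
    (hassoc : ∀ x y z : A, m (m x y) z = m x (m y z)) (i : ι) {j : ι}
    (hj : m (e j) (e j) ≠ 0) : e.repr (m (e i) (e i)) j = 0 := by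
  rcases eq_or_ne i j with rfl | hij
  · obtain ⟨_ | n, hn⟩ := hnil (e i)
    · exact absurd hn (e.ne_zero i)
    · rw [he.ppow_succ] at hn
      exact pow_eq_zero_iff'.mp ((smul_eq_zero.mp hn).resolve_right hj) |>.1
  · have h := hassoc (e i) (e i) (e j)
    rw [he i j hij, map_zero, he.mul_basis_right] at h
    exact (smul_eq_zero.mp h).resolve_right hj

theorem sq_mem_span_image (he : IsNaturalBasis m e) (hnil : ∀ a : A, ∃ k, ppow m a k = 0)
    (hassoc : ∀ x y z : A, m (m x y) z = m x (m y z)) {S : Set ι}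
    (hS : ∀ j, m (e j) (e j) = 0 → j ∈ S) (i : ι) : m (e i) (e i) ∈ span F (e '' S) := by
  refine e.mem_span_image.mpr fun j hj => ?_
  by_contra hjS
  exact Finsupp.mem_support_iff.mp hj (he.repr_sq_eq_zero hnil hassoc i fun h => hjS (hS j h))

theorem exists_sq_eq_zero [Nonempty ι] (he : IsNaturalBasis m e)
    (hnil : ∀ a : A, ∃ k, ppow m a k = 0) (hassoc : ∀ x y z : A, m (m x y) z = m x (m y z)) :
    ∃ z, m (e z) (e z) = 0 := by
  by_contra! h
  obtain ⟨i⟩ := ‹Nonempty ι›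
  have := he.sq_mem_span_image hnil hassoc (S := ∅) (fun j hj => absurd hj (h j)) i
  simp [h i] at this

theorem sq_mul_eq_zero (he : IsNaturalBasis m e) (hnil : ∀ a : A, ∃ k, ppow m a k = 0)
    (hassoc : ∀ x y z : A, m (m x y) z = m x (m y z)) (i : ι) (y : A) :
    m (m (e i) (e i)) y = 0 := by
  suffices span F (e '' {j | m (e j) (e j) = 0}) ≤ LinearMap.ker (m.flip y) from
    this (he.sq_mem_span_image hnil hassoc (fun _ => id) i)
  rw [span_le]
  rintro _ ⟨j, hj, rfl⟩
  rw [SetLike.mem_coe, LinearMap.mem_ker, LinearMap.flip_apply, he.mul_basis_left, hj, smul_zero]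

theorem map₂_le_span_sq (he : IsNaturalBasis m e) :
    map₂ m ⊤ ⊤ ≤ span F (Set.range fun i => m (e i) (e i)) := by
  rw [← e.span_eq, map₂_span_span, span_le]
  rintro _ ⟨_, ⟨i, rfl⟩, _, ⟨j, rfl⟩, rfl⟩
  rcases eq_or_ne i j with rfl | hij
  · exact subset_span ⟨i, rfl⟩
  · show m (e i) (e j) ∈ _
    rw [he i j hij]
    exact zero_mem _

theorem isIdeal_span_pair_sq (he : IsNaturalBasis m e) (hnil : ∀ a : A, ∃ k, ppow m a k = 0)
    (hassoc : ∀ x y z : A, m (m x y) z = m x (m y z)) (p : ι) :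
    IsIdeal m (span F {e p, m (e p) (e p)}) := by
  intro x hx y
  obtain ⟨a, b, rfl⟩ := mem_span_pair.mp hx
  rw [map_add, map_smul, map_smul, LinearMap.add_apply, LinearMap.smul_apply,
    LinearMap.smul_apply, he.mul_basis_left p y, he.sq_mul_eq_zero hnil hassoc, smul_zero, add_zero]
  exact smul_mem _ _ (smul_mem _ _ (subset_span (by simp)))

/-- The ideals `⟨e_p, e_p²⟩` and `⟨e_q, e_q²⟩` span `A` and have dimension at most two. -/
theorem isDecomposable_of_pair (hA : 4 ≤ finrank F A)
    (he : IsNaturalBasis m e) (hnil : ∀ a : A, ∃ k, ppow m a k = 0)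
    (hassoc : ∀ x y z : A, m (m x y) z = m x (m y z)) {p q : ι} (hpq : p ≠ q)
    (hcover : ∀ i, i = p ∨ i = q ∨ m (e i) (e i) = 0)
    (hsq : ∀ i, m (e i) (e i) = 0 → e i ∈ map₂ m ⊤ ⊤) : IsDecomposable m := by
  have : FiniteDimensional F A := Module.finite_of_finrank_pos (by omega)
  set I := span F {e p, m (e p) (e p)}
  set J := span F {e q, m (e q) (e q)}
  have hsq_mem : ∀ i, m (e i) (e i) ∈ I ⊔ J := fun i => by
    rcases hcover i with rfl | rfl | h
    · exact mem_sup_left (subset_span (by simp))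
    · exact mem_sup_right (subset_span (by simp))
    · simp [h]
  have hsup : I ⊔ J = ⊤ := by
    rw [eq_top_iff, ← e.span_eq, span_le]
    rintro _ ⟨i, rfl⟩
    rcases hcover i with rfl | rfl | h
    · exact mem_sup_left (subset_span (by simp))
    · exact mem_sup_right (subset_span (by simp))
    · exact (he.map₂_le_span_sq.trans (span_le.mpr (by rintro _ ⟨j, rfl⟩; exact hsq_mem j)))
        (hsq i h)
  have hinf : I ⊓ J = ⊥ := by
    have hdim := finrank_sup_add_finrank_inf_eq I J
    have h2 : ∀ a b : A, finrank F (span F {a, b}) ≤ 2 := fun a b => by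
      classical
      have := (finrank_span_finset_le_card (R := F) ({a, b} : Finset A)).trans Finset.card_le_two
      rwa [Set.finrank, Finset.coe_insert, Finset.coe_singleton] at this
    have hI : finrank F I ≤ 2 := h2 _ _
    have hJ : finrank F J ≤ 2 := h2 _ _
    rw [hsup, finrank_top] at hdim
    rw [← finrank_eq_zero (R := F)]
    omega
  refine ⟨I, J, he.isIdeal_span_pair_sq hnil hassoc p, he.isIdeal_span_pair_sq hnil hassoc q,
    ?_, ?_, ⟨disjoint_iff.mpr hinf, codisjoint_iff.mpr hsup⟩⟩
  all_goals
    rw [Ne, eq_bot_iff]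
    intro h
    exact e.ne_zero _ ((mem_bot F).mp (h (subset_span (Set.mem_insert _ _))))

theorem reindex {ι' : Type*} (he : IsNaturalBasis m e) (s : ι ≃ ι') :
    IsNaturalBasis m (e.reindex s) := fun i j hij => by
  simpa using he _ _ (s.symm.injective.ne hij)

theorem unitsSMul (he : IsNaturalBasis m e) (u : ι → Fˣ) : IsNaturalBasis m (e.unitsSMul u) :=
  fun i j hij => by simp [Basis.unitsSMul_apply, Units.smul_def, he i j hij]

/-- `v` is `e` with `z` moved to `3` and `e_z` rescaled to `e_{σ 0}²`. -/
theorem exists_normal_form {e : Basis (Fin 4) F A} (he : IsNaturalBasis m e) {z : Fin 4}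
    (hz : m (e z) (e z) = 0) {c : Fin 4 → F} (hc : ∀ i, i ≠ z → c i ≠ 0)
    (hsq : ∀ i, c i • e z = m (e i) (e i)) :
    ∃ v : Basis (Fin 4) F A, IsNaturalBasis m v ∧ ∃ α β : F, α ≠ 0 ∧ β ≠ 0 ∧
      m (v 0) (v 0) = v 3 ∧ m (v 1) (v 1) = α • v 3 ∧ m (v 2) (v 2) = β • v 3 ∧
      m (v 3) (v 3) = 0 := by
  set σ := Equiv.swap z 3
  have hσ : ∀ i, i ≠ 3 → σ i ≠ z := fun i hi h => hi (by simpa [σ] using congr(σ $h))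
  have hc0 := hc _ (hσ 0 (by decide))
  let u : Fin 4 → Fˣ := fun i => if i = 3 then Units.mk0 (c (σ 0)) hc0 else 1
  set v := (e.reindex σ).unitsSMul u
  have hv : ∀ i, v i = (u i : F) • e (σ i) := fun i => by
    simp [v, Basis.unitsSMul_apply, Units.smul_def, σ, Equiv.symm_swap]
  have hv3 : v 3 = c (σ 0) • e z := by simp [hv, u, σ]
  have hsq' : ∀ i, i ≠ 3 → m (v i) (v i) = (c (σ i) / c (σ 0)) • v 3 := fun i hi => by
    rw [hv3, smul_smul, div_mul_cancel₀ _ hc0, hsq, hv]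
    simp [u, hi]
  refine ⟨v, (he.reindex σ).unitsSMul u, c (σ 1) / c (σ 0), c (σ 2) / c (σ 0),
    div_ne_zero (hc _ (hσ 1 (by decide))) hc0, div_ne_zero (hc _ (hσ 2 (by decide))) hc0,
    by simpa [div_self hc0] using hsq' 0 (by decide), hsq' 1 (by decide), hsq' 2 (by decide), ?_⟩
  rw [hv3, map_smul, map_smul, LinearMap.smul_apply, hz, smul_zero, smul_zero]

end IsNaturalBasis

end EvolutionAlgebra

theorem exists_pair_compl_fin_four {z z' : Fin 4} (h : z' ≠ z) :
    ∃ p q : Fin 4, p ≠ q ∧ ∀ i, i = p ∨ i = q ∨ i = z ∨ i = z' := by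
  revert z z'
  decide

theorem nil_assoc_indecomposable_dim4_classification_general
    (F : Type*) [Field F]
    (A : Type*) [AddCommGroup A] [Module F A]
    (m : A →ₗ[F] A →ₗ[F] A)
    (e : Module.Basis (Fin 4) F A)
    (hnat : ∀ i j : Fin 4, i ≠ j → m (e i) (e j) = 0)
    (hnil : ∀ a : A, ∃ k : ℕ, ppow m a k = 0)
    (hassoc : ∀ x y z : A, m (m x y) z = m x (m y z))
    (hindec : ¬ ∃ I J : Submodule F A,
      (∀ x ∈ I, ∀ y : A, m x y ∈ I) ∧ (∀ x ∈ J, ∀ y : A, m x y ∈ J) ∧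
      I ≠ ⊥ ∧ J ≠ ⊥ ∧ IsCompl I J) :
    ∃ v : Module.Basis (Fin 4) F A,
      (∀ i j : Fin 4, i ≠ j → m (v i) (v j) = 0) ∧
      ∃ α β : F, α ≠ 0 ∧ β ≠ 0 ∧
        m (v 0) (v 0) = v 3 ∧
        m (v 1) (v 1) = α • v 3 ∧
        m (v 2) (v 2) = β • v 3 ∧
        m (v 3) (v 3) = 0 := by
  have he : IsNaturalBasis m e := hnat
  obtain ⟨z, hz⟩ := he.exists_sq_eq_zero hnil hassoc
  by_cases hW : ∀ j, m (e j) (e j) = 0 → e j ∈ map₂ m ⊤ ⊤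
  · by_cases huniq : ∀ j, m (e j) (e j) = 0 → j = z
    · choose c hc using fun i => mem_span_singleton.mp <| by
        simpa using he.sq_mem_span_image hnil hassoc (S := {z}) huniq i
      exact he.exists_normal_form hz (fun i hi h => hi (huniq i (by rw [← hc, h, zero_smul]))) hc
    · push Not at huniq
      obtain ⟨z', hz', hz'z⟩ := huniq
      obtain ⟨p, q, hpq, hcover⟩ := exists_pair_compl_fin_four hz'z
      refine absurd (he.isDecomposable_of_pair (by simp [finrank_eq_card_basis e]) hnil hassoc hpq
        (fun i => ?_) hW) hindec
      rcases hcover i with h | h | rfl | rfl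
      · exact .inl h
      · exact .inr (.inl h)
      · exact .inr (.inr hz)
      · exact .inr (.inr hz')
  · push Not at hW
    obtain ⟨w, hw, hwA⟩ := hW
    refine absurd (isDecomposable_of_mul_eq_zero_of_notMem (w := e w) (fun y => ?_) hwA ?_) hindec
    · rw [he.mul_basis_left, hw, smul_zero]
    · exact e.span_singleton_ne_top w

/-- a 4-dimensional nil, associative, indecomposable evolution algebra over
a field of characteristic ≠ 2 is isomorphic to `N_{4,5}(α,β)`:
`v₁² = v₄`, `v₂² = α v₄`, `v₃² = β v₄`, `v₄² = 0` with `α, β ≠ 0`. -/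
theorem nil_assoc_indecomposable_dim4_classification
    (F : Type*) [Field F] (h2 : (2 : F) ≠ 0)
    (A : Type*) [AddCommGroup A] [Module F A]
    (m : A →ₗ[F] A →ₗ[F] A) (hcomm : ∀ x y : A, m x y = m y x)
    (e : Module.Basis (Fin 4) F A)
    (hnat : ∀ i j : Fin 4, i ≠ j → m (e i) (e j) = 0)
    (hnil : ∀ a : A, ∃ k : ℕ, ppow m a k = 0)
    (hassoc : ∀ x y z : A, m (m x y) z = m x (m y z))
    (hindec : ¬ ∃ I J : Submodule F A,
      (∀ x ∈ I, ∀ y : A, m x y ∈ I) ∧ (∀ x ∈ J, ∀ y : A, m x y ∈ J) ∧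
      I ≠ ⊥ ∧ J ≠ ⊥ ∧ IsCompl I J) :
    ∃ v : Module.Basis (Fin 4) F A,
      (∀ i j : Fin 4, i ≠ j → m (v i) (v j) = 0) ∧
      ∃ α β : F, α ≠ 0 ∧ β ≠ 0 ∧
        m (v 0) (v 0) = v 3 ∧
        m (v 1) (v 1) = α • v 3 ∧
        m (v 2) (v 2) = β • v 3 ∧
        m (v 3) (v 3) = 0 :=
  nil_assoc_indecomposable_dim4_classification_general F A m e hnat hnil hassoc hindec
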